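/- (Noise bound, Lemma 2.) Let 𝐔₁, …, 𝐔_T be subspaces of ℝⁿ, all of dimension d, such that d₂(𝐔_j, 𝐔_{j+1}) ≤ c for j = 1, …, T−1 and some c ≥ 0. Let w_j = w̄_j + e_j for j = 1, …, T, where w̄_j ∈ 𝐔_j and ‖e_j‖₂ ≤ ε for some ε ≥ 0. Let W ∈ ℝ^{n×T} be the matrix with columns w₁, …, w_T and let D = diag(T−1, T−2, …, 1, 0) ∈ ℝ^{T×T}. Then ‖P_{𝐔_T}^⊥ W‖_F ≤ c · ‖W D‖_F + ε √T (c(T−1) + 1). -/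

import Mathlib

/-!
Write `P_j = U_j U_jᵀ`. Splitting `x = P_j x + (1 - P_j) x` gives the one-step bound
`‖(1 - P_{j+1}) x‖ ≤ ‖(1 - P_{j+1}) P_j‖_F ‖x‖ + ‖(1 - P_j) x‖`, and for projections of equal rank
`‖(1 - P_{j+1}) P_j‖_F = d₂(𝐔_j, 𝐔_{j+1}) ≤ c`. Telescoping from `j` to the last index bounds the
`j`-th column of `P_{𝐔_T}^⊥ W` by `c (T - 1 - j) ‖w_j‖ + ‖(1 - P_j) w_j‖`, and
`(1 - P_j) w_j = (1 - P_j) e_j` has norm at most `ε`. So the column norms of `P_{𝐔_T}^⊥ W` are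
dominated by those of `c W D` plus the constant `ε`, and the triangle inequality in `ℝ^T` concludes.
-/

open Matrix

/-- Euclidean norm of a vector in `ℝⁿ`. -/
noncomputable def vecEnorm {n : ℕ} (v : Fin n → ℝ) : ℝ :=
  Real.sqrt (∑ i, (v i) ^ 2)

/-- Frobenius norm of a matrix. -/
noncomputable def frob {n m : ℕ} (A : Matrix (Fin n) (Fin m) ℝ) : ℝ :=
  Real.sqrt (Matrix.trace (Aᵀ * A))

section Norms

variable {n m : ℕ}

lemma vecEnorm_eq_norm_toLp (v : Fin n → ℝ) : vecEnorm v = ‖WithLp.toLp 2 v‖ := by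
  simp [vecEnorm, EuclideanSpace.norm_eq]

lemma vecEnorm_nonneg (v : Fin n → ℝ) : 0 ≤ vecEnorm v := Real.sqrt_nonneg _

lemma vecEnorm_sq (v : Fin n → ℝ) : vecEnorm v ^ 2 = v ⬝ᵥ v := by
  rw [vecEnorm, Real.sq_sqrt (by positivity)]
  simp [dotProduct, sq]

lemma vecEnorm_add_le (u v : Fin n → ℝ) : vecEnorm (u + v) ≤ vecEnorm u + vecEnorm v := by
  simpa only [vecEnorm_eq_norm_toLp, WithLp.toLp_add] using
    norm_add_le (WithLp.toLp 2 u) (WithLp.toLp 2 v)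

lemma vecEnorm_smul (a : ℝ) (v : Fin n → ℝ) : vecEnorm (a • v) = |a| * vecEnorm v := by
  simpa only [vecEnorm_eq_norm_toLp, WithLp.toLp_smul, Real.norm_eq_abs] using
    norm_smul a (WithLp.toLp 2 v)

lemma vecEnorm_const (a : ℝ) : vecEnorm (fun _ : Fin n => a) = Real.sqrt n * |a| := by
  simp [vecEnorm, Real.sqrt_mul (Nat.cast_nonneg n), Real.sqrt_sq_eq_abs]

lemma vecEnorm_le_of_abs_le {u v : Fin n → ℝ} (h : ∀ i, |u i| ≤ |v i|) :
    vecEnorm u ≤ vecEnorm v :=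
  Real.sqrt_le_sqrt (Finset.sum_le_sum fun i _ => sq_le_sq.mpr (h i))

lemma trace_transpose_mul_self (A : Matrix (Fin n) (Fin m) ℝ) :
    trace (Aᵀ * A) = ∑ j, ∑ i, A i j ^ 2 := by
  simp [trace, mul_apply, sq]

lemma frob_eq_vecEnorm_cols (A : Matrix (Fin n) (Fin m) ℝ) :
    frob A = vecEnorm fun j => vecEnorm (Aᵀ j) := by
  have hcol : ∀ j, vecEnorm (Aᵀ j) ^ 2 = ∑ i, A i j ^ 2 := fun j => by
    rw [vecEnorm, Real.sq_sqrt (by positivity)]; rfl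
  rw [frob, vecEnorm, trace_transpose_mul_self]
  simp only [hcol]

lemma vecEnorm_mulVec_le_frob (A : Matrix (Fin n) (Fin m) ℝ) (x : Fin m → ℝ) :
    vecEnorm (A *ᵥ x) ≤ frob A * vecEnorm x := by
  rw [frob, trace_transpose_mul_self, Finset.sum_comm, vecEnorm, vecEnorm,
    ← Real.sqrt_mul (by positivity), Finset.sum_mul]
  refine Real.sqrt_le_sqrt (Finset.sum_le_sum fun i _ => ?_)
  exact Finset.sum_mul_sq_le_sq_mul_sq Finset.univ (A i) x

lemma transpose_mul_apply_eq_mulVec {k : ℕ} (A : Matrix (Fin n) (Fin m) ℝ)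
    (B : Matrix (Fin m) (Fin k) ℝ) (j : Fin k) : (A * B)ᵀ j = A *ᵥ Bᵀ j := rfl

end Norms

section Projections

variable {n d : ℕ}

lemma isIdempotentElem_mul_transpose {U : Matrix (Fin n) (Fin d) ℝ} (hU : Uᵀ * U = 1) :
    IsIdempotentElem (U * Uᵀ) := by
  rw [IsIdempotentElem, Matrix.mul_assoc, ← Matrix.mul_assoc Uᵀ, hU, Matrix.one_mul]

lemma trace_mul_transpose {U : Matrix (Fin n) (Fin d) ℝ} (hU : Uᵀ * U = 1) :
    trace (U * Uᵀ) = d := by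
  rw [trace_mul_comm, hU, trace_one, Fintype.card_fin]

lemma compl_proj_mulVec_mulVec {U : Matrix (Fin n) (Fin d) ℝ} (hU : Uᵀ * U = 1)
    (z : Fin d → ℝ) : (1 - U * Uᵀ) *ᵥ (U *ᵥ z) = 0 := by
  rw [mulVec_mulVec, Matrix.sub_mul, Matrix.mul_assoc, hU, Matrix.mul_one, Matrix.one_mul,
    sub_self, zero_mulVec]

lemma vecEnorm_compl_proj_mulVec_sq {U : Matrix (Fin n) (Fin d) ℝ} (hU : Uᵀ * U = 1)
    (x : Fin n → ℝ) :
    vecEnorm ((1 - U * Uᵀ) *ᵥ x) ^ 2 = vecEnorm x ^ 2 - vecEnorm (Uᵀ *ᵥ x) ^ 2 := by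
  set y := Uᵀ *ᵥ x
  have hxy : x ⬝ᵥ (U *ᵥ y) = y ⬝ᵥ y := by
    rw [dotProduct_mulVec, ← mulVec_transpose]
  have hyy : (U *ᵥ y) ⬝ᵥ (U *ᵥ y) = y ⬝ᵥ y := by
    rw [dotProduct_mulVec, ← mulVec_transpose, mulVec_mulVec, hU, one_mulVec]
  have hsplit : (1 - U * Uᵀ) *ᵥ x = x - U *ᵥ y := by
    rw [sub_mulVec, one_mulVec, ← mulVec_mulVec]
  rw [vecEnorm_sq, vecEnorm_sq, vecEnorm_sq, hsplit, sub_dotProduct, dotProduct_sub,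
    dotProduct_sub, hxy, dotProduct_comm (U *ᵥ y), hxy, hyy]
  ring

lemma vecEnorm_compl_proj_mulVec_le {U : Matrix (Fin n) (Fin d) ℝ} (hU : Uᵀ * U = 1)
    (x : Fin n → ℝ) : vecEnorm ((1 - U * Uᵀ) *ᵥ x) ≤ vecEnorm x := by
  have h := vecEnorm_compl_proj_mulVec_sq hU x
  have := sq_nonneg (vecEnorm (Uᵀ *ᵥ x))
  exact (pow_le_pow_iff_left₀ (vecEnorm_nonneg _) (vecEnorm_nonneg _) two_ne_zero).mp
    (by linarith)

lemma vecEnorm_compl_proj_mulVec_add_le {U : Matrix (Fin n) (Fin d) ℝ} (hU : Uᵀ * U = 1)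
    (z : Fin d → ℝ) (e : Fin n → ℝ) : vecEnorm ((1 - U * Uᵀ) *ᵥ (U *ᵥ z + e)) ≤ vecEnorm e := by
  rw [mulVec_add, compl_proj_mulVec_mulVec hU, zero_add]
  exact vecEnorm_compl_proj_mulVec_le hU e

-- `‖(1 - Q) P‖_F² = tr(P (1 - Q) P) = tr P - tr(P Q)`, and `tr P = tr Q` makes this `tr((1 - P) Q)`.
lemma frob_compl_mul_eq_sqrt_trace {P Q : Matrix (Fin n) (Fin n) ℝ} (hP : Pᵀ = P) (hQ : Qᵀ = Q)
    (hPi : IsIdempotentElem P) (hQi : IsIdempotentElem Q) (htr : P.trace = Q.trace) :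
    frob ((1 - Q) * P) = Real.sqrt (trace ((1 - P) * Q)) := by
  have hQc : (1 - Q)ᵀ = 1 - Q := by rw [transpose_sub, transpose_one, hQ]
  have hQci : (1 - Q) * (1 - Q) = 1 - Q := hQi.one_sub
  have hgram : ((1 - Q) * P)ᵀ * ((1 - Q) * P) = P * (1 - Q) * P := by
    rw [transpose_mul, hP, hQc, Matrix.mul_assoc P, ← Matrix.mul_assoc (1 - Q), hQci,
      Matrix.mul_assoc]
  rw [frob, hgram, trace_mul_cycle, hPi.eq, Matrix.mul_sub, Matrix.sub_mul, Matrix.mul_one,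
    Matrix.one_mul, trace_sub, trace_sub, htr]

lemma vecEnorm_compl_proj_mulVec_le_add {U V : Matrix (Fin n) (Fin d) ℝ} (hU : Uᵀ * U = 1)
    (hV : Vᵀ * V = 1) (x : Fin n → ℝ) :
    vecEnorm ((1 - V * Vᵀ) *ᵥ x) ≤
      Real.sqrt (trace ((1 - U * Uᵀ) * (V * Vᵀ))) * vecEnorm x
        + vecEnorm ((1 - U * Uᵀ) *ᵥ x) := by
  have hsplit : (1 - V * Vᵀ) *ᵥ x =
      ((1 - V * Vᵀ) * (U * Uᵀ)) *ᵥ x + (1 - V * Vᵀ) *ᵥ ((1 - U * Uᵀ) *ᵥ x) := by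
    rw [mulVec_mulVec, ← add_mulVec, ← Matrix.mul_add, add_sub_cancel, Matrix.mul_one]
  have hfrob : frob ((1 - V * Vᵀ) * (U * Uᵀ)) = Real.sqrt (trace ((1 - U * Uᵀ) * (V * Vᵀ))) :=
    frob_compl_mul_eq_sqrt_trace (by simp) (by simp) (isIdempotentElem_mul_transpose hU)
      (isIdempotentElem_mul_transpose hV)
      (by rw [trace_mul_transpose hU, trace_mul_transpose hV])
  rw [hsplit, ← hfrob]
  exact (vecEnorm_add_le _ _).trans
    (add_le_add (vecEnorm_mulVec_le_frob _ _) (vecEnorm_compl_proj_mulVec_le hV _))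

lemma vecEnorm_compl_proj_mulVec_le_of_chain {T : ℕ} {U : Fin T → Matrix (Fin n) (Fin d) ℝ}
    (hU : ∀ j, (U j)ᵀ * U j = 1) {c : ℝ}
    (hUc : ∀ (j : Fin T) (hj : (j : ℕ) + 1 < T),
      Real.sqrt (trace
        ((1 - U j * (U j)ᵀ) * (U ⟨(j : ℕ) + 1, hj⟩ * (U ⟨(j : ℕ) + 1, hj⟩)ᵀ))) ≤ c)
    (x : Fin n → ℝ) (j : Fin T) :
    ∀ (m : ℕ) (hjm : (j : ℕ) + m < T),
      vecEnorm ((1 - U ⟨j + m, hjm⟩ * (U ⟨j + m, hjm⟩)ᵀ) *ᵥ x)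
        ≤ c * m * vecEnorm x + vecEnorm ((1 - U j * (U j)ᵀ) *ᵥ x)
  | 0, _ => by simp
  | m + 1, hjm => by
    have hstep :=
      vecEnorm_compl_proj_mulVec_le_add (hU ⟨j + m, by omega⟩) (hU ⟨j + m + 1, hjm⟩) x
    have hprev := vecEnorm_compl_proj_mulVec_le_of_chain hU hUc x j m (by omega)
    have hc := mul_le_mul_of_nonneg_right (hUc ⟨j + m, by omega⟩ hjm) (vecEnorm_nonneg x)
    show vecEnorm ((1 - U ⟨j + m + 1, hjm⟩ * (U ⟨j + m + 1, hjm⟩)ᵀ) *ᵥ x) ≤ _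
    push_cast
    linarith

lemma vecEnorm_compl_proj_last_mulVec_le {T : ℕ} {U : Fin T → Matrix (Fin n) (Fin d) ℝ}
    (hU : ∀ j, (U j)ᵀ * U j = 1) {c : ℝ}
    (hUc : ∀ (j : Fin T) (hj : (j : ℕ) + 1 < T),
      Real.sqrt (trace
        ((1 - U j * (U j)ᵀ) * (U ⟨(j : ℕ) + 1, hj⟩ * (U ⟨(j : ℕ) + 1, hj⟩)ᵀ))) ≤ c)
    (hL : T - 1 < T) (j : Fin T) (z : Fin d → ℝ) (e : Fin n → ℝ) :
    vecEnorm ((1 - U ⟨T - 1, hL⟩ * (U ⟨T - 1, hL⟩)ᵀ) *ᵥ (U j *ᵥ z + e))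
      ≤ c * ((T : ℝ) - 1 - (j : ℕ)) * vecEnorm (U j *ᵥ z + e) + vecEnorm e := by
  have hchain := vecEnorm_compl_proj_mulVec_le_of_chain hU hUc (U j *ᵥ z + e) j (T - 1 - j)
    (by omega)
  have hlast : (⟨j + (T - 1 - j), by omega⟩ : Fin T) = ⟨T - 1, hL⟩ := Fin.ext (by simp; omega)
  have hcast : ((T - 1 - j : ℕ) : ℝ) = (T : ℝ) - 1 - (j : ℕ) := by
    rw [Nat.sub_sub, Nat.cast_sub (by omega)]; push_cast; ring
  rw [hlast, hcast] at hchain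
  linarith [vecEnorm_compl_proj_mulVec_add_le (hU j) z e]

end Projections

/-- Noise bound, Lemma 2: Let `𝐔₁, …, 𝐔_T` be subspaces of `ℝⁿ`, all of
dimension `d` (represented by orthonormal matrices `U j ∈ ℝ^{n×d}`, so
`P_{𝐔_j} = (U j)(U j)ᵀ`), such that `d₂(𝐔_j, 𝐔_{j+1}) ≤ c` for `j = 1, …, T−1` and some
`c ≥ 0`. Let `w_j = w̄_j + e_j` for `j = 1, …, T`, where `w̄_j ∈ 𝐔_j` and `‖e_j‖₂ ≤ ε`
for some `ε ≥ 0`. Let `W ∈ ℝ^{n×T}` be the matrix with columns `w₁, …, w_T` and let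
`D = diag(T−1, T−2, …, 1, 0) ∈ ℝ^{T×T}`. Then
`‖P_{𝐔_T}^⊥ W‖_F ≤ c · ‖W D‖_F + ε √T (c(T−1) + 1)`. -/
theorem stmt5 {n d T : ℕ} (hT : 0 < T)
    (U : Fin T → Matrix (Fin n) (Fin d) ℝ)
    (hU : ∀ j, (U j)ᵀ * U j = 1)
    (c : ℝ) (hc : 0 ≤ c)
    (hUc : ∀ (j : Fin T) (hj : (j : ℕ) + 1 < T),
      Real.sqrt (Matrix.trace
        ((1 - U j * (U j)ᵀ) * (U ⟨(j : ℕ) + 1, hj⟩ * (U ⟨(j : ℕ) + 1, hj⟩)ᵀ))) ≤ c)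
    (ε : ℝ) (hε : 0 ≤ ε)
    (wbar e w : Fin T → Fin n → ℝ)
    (hwbar : ∀ j, ∃ z : Fin d → ℝ, wbar j = (U j).mulVec z)
    (he : ∀ j, vecEnorm (e j) ≤ ε)
    (hw : ∀ j, w j = wbar j + e j)
    (W : Matrix (Fin n) (Fin T) ℝ) (hW : W = Matrix.of fun i j => w j i)
    (D : Matrix (Fin T) (Fin T) ℝ)
    (hD : D = Matrix.diagonal fun j : Fin T => (T : ℝ) - 1 - (j : ℕ)) :
    frob ((1 - U ⟨T - 1, by omega⟩ * (U ⟨T - 1, by omega⟩)ᵀ) * W)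
      ≤ c * frob (W * D) + ε * Real.sqrt T * (c * ((T : ℝ) - 1) + 1) := by
  set P := 1 - U ⟨T - 1, by omega⟩ * (U ⟨T - 1, by omega⟩)ᵀ
  have hWcol : ∀ j, Wᵀ j = w j := fun j => by rw [hW]; rfl
  have hWDcol : ∀ j, (W * D)ᵀ j = ((T : ℝ) - 1 - (j : ℕ)) • w j := fun j => by
    funext i; simp [hD, hW, mul_comm]
  have hcol : ∀ j : Fin T, vecEnorm (P *ᵥ w j) ≤ c * vecEnorm ((W * D)ᵀ j) + ε := fun j => by
    obtain ⟨z, hz⟩ := hwbar j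
    have hTj : (0 : ℝ) ≤ (T : ℝ) - 1 - (j : ℕ) := by
      have : 1 + (j : ℕ) ≤ T := by omega
      rw [sub_sub, sub_nonneg]; exact_mod_cast this
    rw [hWDcol, vecEnorm_smul, abs_of_nonneg hTj, hw j, hz, ← mul_assoc]
    linarith [vecEnorm_compl_proj_last_mulVec_le hU hUc (by omega) j z (e j), he j]
  have hε1 : ε ≤ ε * (c * ((T : ℝ) - 1) + 1) :=
    le_mul_of_one_le_right hε
      (le_add_of_nonneg_left (mul_nonneg hc (sub_nonneg.mpr (Nat.one_le_cast.mpr hT))))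
  calc frob (P * W) = vecEnorm fun j => vecEnorm (P *ᵥ w j) := by
        simp only [frob_eq_vecEnorm_cols, transpose_mul_apply_eq_mulVec, hWcol]
    _ ≤ vecEnorm ((c • fun j => vecEnorm ((W * D)ᵀ j)) + fun _ => ε) :=
        vecEnorm_le_of_abs_le fun j => by
          rw [abs_of_nonneg (vecEnorm_nonneg _)]
          exact (hcol j).trans (le_abs_self _)
    _ ≤ c * frob (W * D) + Real.sqrt T * ε := by
        refine (vecEnorm_add_le _ _).trans_eq ?_
        rw [vecEnorm_smul, vecEnorm_const, abs_of_nonneg hc, abs_of_nonneg hε,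
          frob_eq_vecEnorm_cols]
    _ ≤ c * frob (W * D) + ε * Real.sqrt T * (c * ((T : ℝ) - 1) + 1) := by
        linarith [mul_le_mul_of_nonneg_left hε1 (Real.sqrt_nonneg T)]
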